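/- arXiv:1805.08007 — 2 statements merged into one kernel-verified Lean document; each statement's English description precedes it below -/
import Mathlib

section
/- Let ζ ∈ ℂ \ ℚ(i) be badly approximable with constant C > 0 (so |ζ - p/q| > C/|q|² for all p, q ∈ ℤ[i], q ≠ 0). Let (a_n) be the Hurwitz continued fraction partial quotients of ζ and γ = (1 - √2/2)^{-1}. Then |a_n| ≤ γ/C + 1 for all n ≥ 1; in particular the partial quotients are bounded. -/
open Complex Filter

/-- `z` is a Gaussian integer (as a complex number). -/
def IsGaussianInt (z : ℂ) : Prop := ∃ m n : ℤ, z = (m : ℂ) + (n : ℂ) * I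

/-- `z` belongs to `ℚ(i)`. -/
def IsGaussianRational (z : ℂ) : Prop :=
  ∃ p q : ℂ, IsGaussianInt p ∧ IsGaussianInt q ∧ q ≠ 0 ∧ z = p / q

/-- The fundamental domain `𝔉`. -/
def InFund (z : ℂ) : Prop :=
  -(1/2) ≤ z.re ∧ z.re < 1/2 ∧ -(1/2) ≤ z.im ∧ z.im < 1/2

/-- Nearest Gaussian integer. -/
noncomputable def nearGauss (z : ℂ) : ℂ :=
  (⌊z.re + 1/2⌋ : ℤ) + (⌊z.im + 1/2⌋ : ℤ) * I

/-- Complete quotients of the Hurwitz continued fraction of `z`. -/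
noncomputable def hcfZ (z : ℂ) : ℕ → ℂ
  | 0 => z
  | n + 1 => 1 / (hcfZ z n - nearGauss (hcfZ z n))

/-- Partial quotients of the Hurwitz continued fraction of `z`. -/
noncomputable def hcfA (z : ℂ) (n : ℕ) : ℂ := nearGauss (hcfZ z n)

/-- Numerators: `hcfP z (n+2) = p n`, with `p (-2) = 0`, `p (-1) = 1`. -/
noncomputable def hcfP (z : ℂ) : ℕ → ℂ
  | 0 => 0
  | 1 => 1
  | n + 2 => hcfA z n * hcfP z (n + 1) + hcfP z n

/-- Denominators: `hcfQ z (n+2) = q n`, with `q (-2) = 1`, `q (-1) = 0`. -/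
noncomputable def hcfQ (z : ℂ) : ℕ → ℂ
  | 0 => 1
  | 1 => 0
  | n + 2 => hcfA z n * hcfQ z (n + 1) + hcfQ z n

/-
Write `D_n = q_n ζ - p_n`. The complete quotients satisfy `D_{n+1} z_{n+1} = -D_n` and
`‖z_n - a_n‖ ≤ √2/2`, so the errors shrink: `‖D_{n+1}‖ ≤ (√2/2) ‖D_n‖`. Combined with
the determinant identity `q_{n+1} D_n - q_n D_{n+1} = ±1` this keeps `‖q_n D_n‖ < √2`
for all `n`, hence `‖q_{n+1} D_n‖ < 2`. Bad approximability gives `‖q_{n+1} D_{n+1}‖ > C`,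
so `‖z_{n+1}‖ = ‖q_{n+1} D_n‖ / ‖q_{n+1} D_{n+1}‖ < 2 / C`, and the nearest Gaussian
integer `a_{n+1}` is within `√2/2` of `z_{n+1}`. Finally `2/C + √2/2 ≤ γ/C + 1` as `γ ≥ 2`.
-/

lemma isGaussianInt_nearGauss (z : ℂ) : IsGaussianInt (nearGauss z) := ⟨_, _, rfl⟩

lemma IsGaussianInt.add {x y : ℂ} (hx : IsGaussianInt x) (hy : IsGaussianInt y) :
    IsGaussianInt (x + y) := by
  obtain ⟨a, b, rfl⟩ := hx
  obtain ⟨c, d, rfl⟩ := hy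
  exact ⟨a + c, b + d, by push_cast; ring⟩

lemma IsGaussianInt.mul {x y : ℂ} (hx : IsGaussianInt x) (hy : IsGaussianInt y) :
    IsGaussianInt (x * y) := by
  obtain ⟨a, b, rfl⟩ := hx
  obtain ⟨c, d, rfl⟩ := hy
  exact ⟨a * c - b * d, a * d + b * c, by push_cast; linear_combination ((b : ℂ) * d) * I_sq⟩

lemma IsGaussianInt.isGaussianRational {x : ℂ} (hx : IsGaussianInt x) :
    IsGaussianRational x :=
  ⟨x, 1, hx, ⟨1, 0, by simp⟩, one_ne_zero, (div_one x).symm⟩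

lemma IsGaussianRational.add_isGaussianInt {x g : ℂ} (hx : IsGaussianRational x)
    (hg : IsGaussianInt g) : IsGaussianRational (x + g) := by
  obtain ⟨p, q, hp, hq, hq0, rfl⟩ := hx
  exact ⟨p + g * q, q, hp.add (hg.mul hq), hq, hq0, by field_simp⟩

lemma IsGaussianRational.inv {x : ℂ} (hx : IsGaussianRational x) : IsGaussianRational x⁻¹ := by
  obtain ⟨p, q, hp, hq, hq0, rfl⟩ := hx
  rcases eq_or_ne p 0 with rfl | hp0
  · simpa using IsGaussianInt.isGaussianRational (x := 0) ⟨0, 0, by simp⟩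
  · exact ⟨q, p, hq, hp, hp0, inv_div p q⟩

lemma norm_sub_nearGauss_le (z : ℂ) : ‖z - nearGauss z‖ ≤ √2 / 2 := by
  have hre : (z - nearGauss z).re = z.re - ⌊z.re + 1/2⌋ := by simp [nearGauss]
  have him : (z - nearGauss z).im = z.im - ⌊z.im + 1/2⌋ := by simp [nearGauss]
  have hnormSq : normSq (z - nearGauss z) ≤ (√2 / 2) ^ 2 := by
    rw [normSq_apply, hre, him, div_pow, Real.sq_sqrt zero_le_two]
    nlinarith [Int.floor_le (z.re + 1/2), Int.lt_floor_add_one (z.re + 1/2),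
      Int.floor_le (z.im + 1/2), Int.lt_floor_add_one (z.im + 1/2)]
  rw [norm_def]
  exact (Real.sqrt_le_sqrt hnormSq).trans_eq (Real.sqrt_sq (by positivity))

lemma norm_nearGauss_le (z : ℂ) : ‖nearGauss z‖ ≤ ‖z‖ + √2 / 2 := by
  calc ‖nearGauss z‖ ≤ ‖z‖ + ‖z - nearGauss z‖ := norm_le_norm_add_norm_sub _ _
    _ ≤ ‖z‖ + √2 / 2 := by gcongr; exact norm_sub_nearGauss_le z

lemma hcfP_add_two (ζ : ℂ) (n : ℕ) :
    hcfP ζ (n + 2) = hcfA ζ n * hcfP ζ (n + 1) + hcfP ζ n := rfl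

lemma hcfQ_add_two (ζ : ℂ) (n : ℕ) :
    hcfQ ζ (n + 2) = hcfA ζ n * hcfQ ζ (n + 1) + hcfQ ζ n := rfl

lemma isGaussianInt_hcfP_and_hcfQ (ζ : ℂ) :
    ∀ n, IsGaussianInt (hcfP ζ n) ∧ IsGaussianInt (hcfQ ζ n)
  | 0 => ⟨⟨0, 0, by simp [hcfP]⟩, ⟨1, 0, by simp [hcfQ]⟩⟩
  | 1 => ⟨⟨1, 0, by simp [hcfP]⟩, ⟨0, 0, by simp [hcfQ]⟩⟩
  | n + 2 => by
    obtain ⟨hP, hQ⟩ := isGaussianInt_hcfP_and_hcfQ ζ n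
    obtain ⟨hP', hQ'⟩ := isGaussianInt_hcfP_and_hcfQ ζ (n + 1)
    rw [hcfP_add_two, hcfQ_add_two]
    exact ⟨((isGaussianInt_nearGauss _).mul hP').add hP,
      ((isGaussianInt_nearGauss _).mul hQ').add hQ⟩

/-- `hcfD ζ (n + 2) = q_n ζ - p_n` in the indexing of `hcfP` and `hcfQ`. -/
noncomputable def hcfD (ζ : ℂ) (n : ℕ) : ℂ := hcfQ ζ n * ζ - hcfP ζ n

lemma hcfD_add_two (ζ : ℂ) (n : ℕ) :
    hcfD ζ (n + 2) = hcfA ζ n * hcfD ζ (n + 1) + hcfD ζ n := by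
  simp only [hcfD, hcfP_add_two, hcfQ_add_two]
  ring

lemma hcfQ_succ_mul_hcfD_sub (ζ : ℂ) (n : ℕ) :
    hcfQ ζ (n + 1) * hcfD ζ n - hcfQ ζ n * hcfD ζ (n + 1) = (-1) ^ n := by
  induction n with
  | zero => simp [hcfD, hcfP, hcfQ]
  | succ n ih =>
    rw [hcfQ_add_two, hcfD_add_two, pow_succ]
    linear_combination -ih

lemma norm_hcfQ_succ_mul_norm_hcfD_le (ζ : ℂ) (n : ℕ) :
    ‖hcfQ ζ (n + 1)‖ * ‖hcfD ζ n‖ ≤ 1 + ‖hcfQ ζ n‖ * ‖hcfD ζ (n + 1)‖ := by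
  have hdet : hcfQ ζ (n + 1) * hcfD ζ n = (-1) ^ n + hcfQ ζ n * hcfD ζ (n + 1) := by
    linear_combination hcfQ_succ_mul_hcfD_sub ζ n
  rw [← norm_mul, ← norm_mul, hdet]
  simpa using norm_add_le ((-1 : ℂ) ^ n) (hcfQ ζ n * hcfD ζ (n + 1))

lemma lt_norm_mul_norm_mul_sub_of_badlyApprox {ζ p q : ℂ} {C : ℝ} (hq : q ≠ 0)
    (hbad : C / ‖q‖ ^ 2 < ‖ζ - p / q‖) : C < ‖q‖ * ‖q * ζ - p‖ := by
  have hq' : 0 < ‖q‖ := norm_pos_iff.mpr hq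
  have hsub : q * ζ - p = q * (ζ - p / q) := by field_simp
  rwa [hsub, norm_mul, ← mul_assoc, ← sq, ← div_lt_iff₀' (by positivity)]

section Irrational

variable {ζ : ℂ}

lemma not_isGaussianRational_hcfZ (hζ : ¬ IsGaussianRational ζ) (n : ℕ) :
    ¬ IsGaussianRational (hcfZ ζ n) := by
  induction n with
  | zero => exact hζ
  | succ n ih =>
    intro hrat
    have hfrac : IsGaussianRational (hcfZ ζ n - nearGauss (hcfZ ζ n)) := by
      simpa [hcfZ] using hrat.inv
    exact ih (by simpa using hfrac.add_isGaussianInt (isGaussianInt_nearGauss (hcfZ ζ n)))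

lemma hcfZ_succ_mul_sub_hcfA (hζ : ¬ IsGaussianRational ζ) (n : ℕ) :
    hcfZ ζ (n + 1) * (hcfZ ζ n - hcfA ζ n) = 1 := by
  have hne : hcfZ ζ n - hcfA ζ n ≠ 0 := fun h ↦
    not_isGaussianRational_hcfZ hζ n
      (sub_eq_zero.mp h ▸ (isGaussianInt_nearGauss _).isGaussianRational)
  exact one_div_mul_cancel hne

lemma hcfD_succ_mul_hcfZ (hζ : ¬ IsGaussianRational ζ) (n : ℕ) :
    hcfD ζ (n + 1) * hcfZ ζ n = -hcfD ζ n := by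
  induction n with
  | zero => simp [hcfD, hcfP, hcfQ, hcfZ]
  | succ n ih =>
    rw [hcfD_add_two]
    linear_combination hcfZ ζ (n + 1) * ih - hcfD ζ (n + 1) * hcfZ_succ_mul_sub_hcfA hζ n

lemma hcfD_add_two_eq (hζ : ¬ IsGaussianRational ζ) (n : ℕ) :
    hcfD ζ (n + 2) = -(hcfZ ζ n - hcfA ζ n) * hcfD ζ (n + 1) := by
  linear_combination (hcfZ ζ n - hcfA ζ n) * hcfD_succ_mul_hcfZ hζ (n + 1)
    - hcfD ζ (n + 2) * hcfZ_succ_mul_sub_hcfA hζ n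

lemma norm_hcfD_add_two_le (hζ : ¬ IsGaussianRational ζ) (n : ℕ) :
    ‖hcfD ζ (n + 2)‖ ≤ √2 / 2 * ‖hcfD ζ (n + 1)‖ := by
  rw [hcfD_add_two_eq hζ n, norm_mul, norm_neg]
  exact mul_le_mul_of_nonneg_right (norm_sub_nearGauss_le _) (norm_nonneg _)

lemma norm_hcfQ_mul_norm_hcfD_add_two_lt_one (hζ : ¬ IsGaussianRational ζ) {n : ℕ}
    (h : ‖hcfQ ζ (n + 1)‖ * ‖hcfD ζ (n + 1)‖ < √2) :
    ‖hcfQ ζ (n + 1)‖ * ‖hcfD ζ (n + 2)‖ < 1 := by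
  calc ‖hcfQ ζ (n + 1)‖ * ‖hcfD ζ (n + 2)‖
      ≤ √2 / 2 * (‖hcfQ ζ (n + 1)‖ * ‖hcfD ζ (n + 1)‖) := by
        rw [mul_left_comm]; gcongr; exact norm_hcfD_add_two_le hζ n
    _ < √2 / 2 * √2 := by gcongr
    _ = 1 := by rw [div_mul_eq_mul_div, Real.mul_self_sqrt zero_le_two, div_self two_ne_zero]

lemma norm_hcfQ_add_two_mul_norm_hcfD_lt_two (hζ : ¬ IsGaussianRational ζ) {n : ℕ}
    (h : ‖hcfQ ζ (n + 1)‖ * ‖hcfD ζ (n + 1)‖ < √2) :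
    ‖hcfQ ζ (n + 2)‖ * ‖hcfD ζ (n + 1)‖ < 2 := by
  linarith [norm_hcfQ_succ_mul_norm_hcfD_le ζ (n + 1),
    norm_hcfQ_mul_norm_hcfD_add_two_lt_one hζ h]

lemma norm_hcfQ_mul_norm_hcfD_lt_sqrt_two (hζ : ¬ IsGaussianRational ζ) (n : ℕ) :
    ‖hcfQ ζ (n + 1)‖ * ‖hcfD ζ (n + 1)‖ < √2 := by
  induction n with
  | zero => simp [hcfQ]
  | succ n ih =>
    calc ‖hcfQ ζ (n + 2)‖ * ‖hcfD ζ (n + 2)‖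
        ≤ √2 / 2 * (‖hcfQ ζ (n + 2)‖ * ‖hcfD ζ (n + 1)‖) := by
          rw [mul_left_comm]; gcongr; exact norm_hcfD_add_two_le hζ n
      _ < √2 / 2 * 2 := by gcongr; exact norm_hcfQ_add_two_mul_norm_hcfD_lt_two hζ ih
      _ = √2 := by ring

lemma hcfQ_add_two_ne_zero (hζ : ¬ IsGaussianRational ζ) (n : ℕ) : hcfQ ζ (n + 2) ≠ 0 := by
  intro hQ
  have hdet := hcfQ_succ_mul_hcfD_sub ζ (n + 1)
  rw [hQ, zero_mul, zero_sub] at hdet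
  have hone : ‖hcfQ ζ (n + 1)‖ * ‖hcfD ζ (n + 2)‖ = 1 := by
    rw [← norm_mul, ← norm_neg, hdet, norm_pow, norm_neg, norm_one, one_pow]
  exact (norm_hcfQ_mul_norm_hcfD_add_two_lt_one hζ
    (norm_hcfQ_mul_norm_hcfD_lt_sqrt_two hζ n)).ne hone

lemma norm_hcfZ_succ_lt (hζ : ¬ IsGaussianRational ζ) {C : ℝ} (hC : 0 < C)
    (hbad : ∀ p q : ℂ, IsGaussianInt p → IsGaussianInt q → q ≠ 0 →
      C / ‖q‖ ^ 2 < ‖ζ - p / q‖) (n : ℕ) :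
    ‖hcfZ ζ (n + 1)‖ < 2 / C := by
  obtain ⟨hP, hQ⟩ := isGaussianInt_hcfP_and_hcfQ ζ (n + 2)
  have hQD : C < ‖hcfQ ζ (n + 2)‖ * ‖hcfD ζ (n + 2)‖ :=
    lt_norm_mul_norm_mul_sub_of_badlyApprox (hcfQ_add_two_ne_zero hζ n)
      (hbad _ _ hP hQ (hcfQ_add_two_ne_zero hζ n))
  have hZD : ‖hcfD ζ (n + 2)‖ * ‖hcfZ ζ (n + 1)‖ = ‖hcfD ζ (n + 1)‖ := by
    rw [← norm_mul, hcfD_succ_mul_hcfZ hζ, norm_neg]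
  rw [lt_div_iff₀ hC]
  calc ‖hcfZ ζ (n + 1)‖ * C
      ≤ ‖hcfZ ζ (n + 1)‖ * (‖hcfQ ζ (n + 2)‖ * ‖hcfD ζ (n + 2)‖) := by gcongr
    _ = ‖hcfQ ζ (n + 2)‖ * ‖hcfD ζ (n + 1)‖ := by rw [← hZD]; ring
    _ < 2 := norm_hcfQ_add_two_mul_norm_hcfD_lt_two hζ
        (norm_hcfQ_mul_norm_hcfD_lt_sqrt_two hζ n)

end Irrational

lemma two_le_inv_one_sub_sqrt_two_div_two : 2 ≤ (1 - √2 / 2)⁻¹ := by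
  rw [← one_div, le_div_iff₀ (by linarith [Real.sqrt_two_lt_three_halves])]
  linarith [Real.one_lt_sqrt_two]

/-- if `ζ` is badly approximable with constant `C`, then the HCF partial
quotients satisfy `|a_n| ≤ γ/C + 1` for all `n ≥ 1`, where `γ = (1 - √2/2)⁻¹`. -/
theorem bad_implies_bounded_pq (ζ : ℂ) (hζ : ¬ IsGaussianRational ζ) (C : ℝ) (hC : 0 < C)
    (hbad : ∀ p q : ℂ, IsGaussianInt p → IsGaussianInt q → q ≠ 0 →
      C / ‖q‖ ^ 2 < ‖ζ - p / q‖) :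
    ∀ n : ℕ, 1 ≤ n → ‖hcfA ζ n‖ ≤ (1 - Real.sqrt 2 / 2)⁻¹ / C + 1 := by
  intro n hn
  obtain ⟨m, rfl⟩ := Nat.exists_eq_add_of_le' hn
  have hγ : 2 / C ≤ (1 - √2 / 2)⁻¹ / C := by
    gcongr; exact two_le_inv_one_sub_sqrt_two_div_two
  calc ‖hcfA ζ (m + 1)‖ ≤ ‖hcfZ ζ (m + 1)‖ + √2 / 2 := norm_nearGauss_le _
    _ ≤ (1 - √2 / 2)⁻¹ / C + 1 := by
      linarith [norm_hcfZ_succ_lt hζ hC hbad m, Real.sqrt_two_lt_three_halves]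
end

section
/- Let ξ be a quadratic irrational over ℚ(i) with Hurwitz continued fraction ξ = [a₀; a₁, a₂, …]. If |ξ| > 1, the conjugate η of ξ over ℚ(i) lies in F = {w : -1/2 ≤ Re(w), Im(w) < 1/2}, and |a_n| ≥ √8 for every n ≥ 0, then the Hurwitz continued fraction of ξ is purely periodic. -/
/-!
The conjugates `η_n` of the complete quotients `ξ_n` obey the same recursion
`η_{n+1} = 1 / (η_n - a_n)`. Since `|a_n| ≥ √8`, every `η_n` stays in `𝔉` (so `|η_n| < 3/4`)
while `|ξ_n| > 2`. Clearing denominators, `ξ_n` and `η_n` are the roots of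
`L_n (X - ξ_n) (X - η_n)` with coefficients in `ℤ[i]` and a discriminant `D` independent of `n`;
as `|ξ_n - η_n| ≥ 1`, this gives `|L_n| ≤ √|D|` and bounds the other coefficients too, so by
pigeonhole `(ξ_m, η_m) = (ξ_n, η_n)` for some `m < n`. The recursion can then be run backwards:
`η_r = a_r + 1 / η_{r+1}` lies in `𝔉`, which determines the Gaussian integer `a_r` from `η_{r+1}`.
Hence `ξ_0 = ξ_{n-m}`.
-/

open Complex Filter

local notation "𝒢" => GaussianInt.toComplex.range

lemma isGaussianInt_iff_mem_range {z : ℂ} : IsGaussianInt z ↔ z ∈ 𝒢 := by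
  constructor
  · rintro ⟨m, n, rfl⟩
    exact ⟨⟨m, n⟩, GaussianInt.toComplex_def' m n⟩
  · rintro ⟨x, rfl⟩
    exact ⟨x.re, x.im, GaussianInt.toComplex_def x⟩

lemma nearGauss_mem_range (z : ℂ) : nearGauss z ∈ 𝒢 :=
  isGaussianInt_iff_mem_range.mp ⟨_, _, rfl⟩

lemma finite_setOf_mem_range_norm_le (R : ℝ) : {z : ℂ | z ∈ 𝒢 ∧ ‖z‖ ≤ R}.Finite := by
  let N := ⌈R⌉
  have hcoord : ∀ k : ℤ, |(k : ℝ)| ≤ R → k ∈ Set.Icc (-N) N := fun k hk => by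
    have : |k| ≤ N := by exact_mod_cast (Int.cast_abs (R := ℝ) ▸ hk).trans (Int.le_ceil R)
    exact abs_le.mp this
  have hbox : {x : GaussianInt | ‖(x : ℂ)‖ ≤ R}.Finite := by
    refine ((Set.finite_Icc (-N) N).prod (Set.finite_Icc (-N) N)).preimage
      (f := fun x : GaussianInt => (x.re, x.im)) (fun x _ y _ h => ?_) |>.subset ?_
    · simp only [Prod.mk.injEq] at h
      exact Zsqrtd.ext h.1 h.2
    · intro x hx
      refine ⟨hcoord _ ?_, hcoord _ ?_⟩
      · rw [GaussianInt.intCast_re]; exact (abs_re_le_norm _).trans hx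
      · rw [GaussianInt.intCast_im]; exact (abs_im_le_norm _).trans hx
  refine (hbox.image GaussianInt.toComplex).subset ?_
  rintro _ ⟨⟨x, rfl⟩, hx⟩
  exact ⟨x, hx, rfl⟩

lemma InFund.eq_of_sub_mem_range {u v : ℂ} (hu : InFund u) (hv : InFund v) (h : u - v ∈ 𝒢) :
    u = v := by
  obtain ⟨x, hx⟩ := h
  have hint : ∀ k : ℤ, -1 < (k : ℝ) → (k : ℝ) < 1 → k = 0 := fun k h₁ h₂ => by
    have : -1 < k ∧ k < 1 := ⟨by exact_mod_cast h₁, by exact_mod_cast h₂⟩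
    omega
  obtain ⟨hu₁, hu₂, hu₃, hu₄⟩ := hu
  obtain ⟨hv₁, hv₂, hv₃, hv₄⟩ := hv
  have hre : x.re = 0 := hint _
    (by rw [GaussianInt.intCast_re, hx, sub_re]; linarith)
    (by rw [GaussianInt.intCast_re, hx, sub_re]; linarith)
  have him : x.im = 0 := hint _
    (by rw [GaussianInt.intCast_im, hx, sub_im]; linarith)
    (by rw [GaussianInt.intCast_im, hx, sub_im]; linarith)
  have : x = 0 := Zsqrtd.ext hre him
  rw [← sub_eq_zero, ← hx, this, map_zero]

lemma InFund.norm_lt {z : ℂ} (hz : InFund z) : ‖z‖ < 3 / 4 := by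
  obtain ⟨h₁, h₂, h₃, h₄⟩ := hz
  rw [norm_def, Real.sqrt_lt' (by norm_num), normSq_apply]
  nlinarith

lemma inFund_of_norm_lt {z : ℂ} (hz : ‖z‖ < 1 / 2) : InFund z := by
  have hre := abs_lt.mp ((abs_re_le_norm z).trans_lt hz)
  have him := abs_lt.mp ((abs_im_le_norm z).trans_lt hz)
  exact ⟨hre.1.le, hre.2, him.1.le, him.2⟩

lemma inFund_sub_nearGauss (z : ℂ) : InFund (z - nearGauss z) := by
  have hfloor : ∀ t : ℝ, -(1 / 2) ≤ t - ⌊t + 1 / 2⌋ ∧ t - ⌊t + 1 / 2⌋ < 1 / 2 := fun t =>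
    ⟨by linarith [Int.floor_le (t + 1 / 2)], by linarith [Int.lt_floor_add_one (t + 1 / 2)]⟩
  have hre : (z - nearGauss z).re = z.re - ⌊z.re + 1 / 2⌋ := by simp [nearGauss]
  have him : (z - nearGauss z).im = z.im - ⌊z.im + 1 / 2⌋ := by simp [nearGauss]
  rw [InFund, hre, him]
  exact ⟨(hfloor _).1, (hfloor _).2, (hfloor _).1, (hfloor _).2⟩

lemma nearGauss_zero : nearGauss 0 = 0 := by
  have : ⌊(0 : ℝ) + 1 / 2⌋ = 0 := Int.floor_eq_zero_iff.mpr ⟨by norm_num, by norm_num⟩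
  rw [nearGauss, zero_re, zero_im, this]
  simp

lemma hcfZ_succ (z : ℂ) (n : ℕ) : hcfZ z (n + 1) = (hcfZ z n - hcfA z n)⁻¹ :=
  one_div _

lemma hcfZ_eq_hcfA_add_inv (z : ℂ) (n : ℕ) : hcfZ z n = hcfA z n + (hcfZ z (n + 1))⁻¹ := by
  rw [hcfZ_succ, inv_inv, add_sub_cancel]

lemma hcfZ_add (z : ℂ) (m n : ℕ) : hcfZ z (n + m) = hcfZ (hcfZ z m) n := by
  induction n with
  | zero => simp [hcfZ]
  | succ n ih => rw [Nat.add_right_comm, hcfZ_succ, hcfZ_succ, hcfA, hcfA, ih]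

lemma hcfA_add_of_hcfZ_eq {z : ℂ} {p : ℕ} (h : hcfZ z p = z) (n : ℕ) :
    hcfA z (n + p) = hcfA z n := by
  rw [hcfA, hcfA, hcfZ_add, h]

/-- With `η` the conjugate of `ξ`, `hcfConj ξ η n` is the conjugate of `hcfZ ξ n`. -/
noncomputable def hcfConj (ξ η : ℂ) : ℕ → ℂ
  | 0 => η
  | n + 1 => (hcfConj ξ η n - hcfA ξ n)⁻¹

lemma hcfConj_eq_hcfA_add_inv (ξ η : ℂ) (n : ℕ) :
    hcfConj ξ η n = hcfA ξ n + (hcfConj ξ η (n + 1))⁻¹ := by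
  rw [hcfConj, inv_inv, add_sub_cancel]

lemma hcf_eq_of_succ_eq {ξ η : ℂ} {r s : ℕ} (hr : InFund (hcfConj ξ η r))
    (hs : InFund (hcfConj ξ η s)) (hZ : hcfZ ξ (r + 1) = hcfZ ξ (s + 1))
    (hC : hcfConj ξ η (r + 1) = hcfConj ξ η (s + 1)) :
    hcfZ ξ r = hcfZ ξ s ∧ hcfConj ξ η r = hcfConj ξ η s := by
  have hdiff : hcfConj ξ η r - hcfConj ξ η s = hcfA ξ r - hcfA ξ s := by
    rw [hcfConj_eq_hcfA_add_inv ξ η r, hcfConj_eq_hcfA_add_inv ξ η s, hC]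
    ring
  have hconj : hcfConj ξ η r = hcfConj ξ η s :=
    hr.eq_of_sub_mem_range hs (hdiff ▸ sub_mem (nearGauss_mem_range _) (nearGauss_mem_range _))
  have hA : hcfA ξ r = hcfA ξ s := by
    rw [← sub_eq_zero, ← hdiff, hconj, sub_self]
  refine ⟨?_, hconj⟩
  rw [hcfZ_eq_hcfA_add_inv ξ r, hcfZ_eq_hcfA_add_inv ξ s, hA, hZ]

lemma hcf_eq_of_add_eq {ξ η : ℂ} (hF : ∀ n, InFund (hcfConj ξ η n)) {r s : ℕ} (k : ℕ)
    (hZ : hcfZ ξ (r + k) = hcfZ ξ (s + k)) (hC : hcfConj ξ η (r + k) = hcfConj ξ η (s + k)) :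
    hcfZ ξ r = hcfZ ξ s ∧ hcfConj ξ η r = hcfConj ξ η s := by
  induction k with
  | zero => exact ⟨hZ, hC⟩
  | succ k ih =>
    obtain ⟨hZ', hC'⟩ := hcf_eq_of_succ_eq (hF _) (hF _) hZ hC
    exact ih hZ' hC'

-- `11/4 = 2 + 3/4`, and `3/4` bounds the norm on `𝔉`.
lemma two_lt_norm_hcfZ {ξ : ℂ} (ha : ∀ n, 11 / 4 ≤ ‖hcfA ξ n‖) (n : ℕ) : 2 < ‖hcfZ ξ n‖ := by
  have h := (inFund_sub_nearGauss (hcfZ ξ n)).norm_lt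
  rw [← hcfA, norm_sub_rev] at h
  linarith [ha n, norm_sub_norm_le (hcfA ξ n) (hcfZ ξ n)]

lemma hcfZ_ne_hcfA {ξ : ℂ} (ha : ∀ n, 11 / 4 ≤ ‖hcfA ξ n‖) (n : ℕ) : hcfZ ξ n ≠ hcfA ξ n := by
  intro h
  have h0 : hcfA ξ (n + 1) = 0 := by
    rw [hcfA, hcfZ_succ, h, sub_self, inv_zero, nearGauss_zero]
  have := ha (n + 1)
  rw [h0, norm_zero] at this
  norm_num at this

lemma inFund_hcfConj {ξ η : ℂ} (ha : ∀ n, 11 / 4 ≤ ‖hcfA ξ n‖) (hη : InFund η) (n : ℕ) :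
    InFund (hcfConj ξ η n) := by
  induction n with
  | zero => exact hη
  | succ n ih =>
    have hgap : 2 < ‖hcfConj ξ η n - hcfA ξ n‖ := by
      rw [norm_sub_rev]
      linarith [ha n, ih.norm_lt, norm_sub_norm_le (hcfA ξ n) (hcfConj ξ η n)]
    apply inFund_of_norm_lt
    rw [hcfConj, norm_inv]
    exact inv_lt_of_inv_lt₀ (by norm_num) (by linarith)

/-- `x` and `y` are the roots of `L (X - x) (X - y)`, a quadratic over `ℤ[i]` of
discriminant `D`. -/
def IsGaussianQuadraticRoots (D x y : ℂ) : Prop :=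
  ∃ L : ℂ, L ≠ 0 ∧ L ∈ 𝒢 ∧ L * (x + y) ∈ 𝒢 ∧ L * (x * y) ∈ 𝒢 ∧ (L * (x - y)) ^ 2 = D

lemma isGaussianQuadraticRoots_of_isGaussianRational {b c x y : ℂ}
    (hb : IsGaussianRational b) (hc : IsGaussianRational c)
    (hx : x ^ 2 + b * x + c = 0) (hy : y ^ 2 + b * y + c = 0) (hxy : x ≠ y) :
    ∃ D, IsGaussianQuadraticRoots D x y := by
  have hsum : x + y = -b := by
    have : (x - y) * (x + y + b) = 0 := by linear_combination hx - hy
    linear_combination (mul_eq_zero.mp this).resolve_left (sub_ne_zero.mpr hxy)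
  have hprod : x * y = c := by linear_combination -hx + x * hsum
  obtain ⟨pb, qb, hpb, hqb, hqb0, rfl⟩ := hb
  obtain ⟨pc, qc, hpc, hqc, hqc0, rfl⟩ := hc
  simp only [isGaussianInt_iff_mem_range] at hpb hqb hpc hqc
  refine ⟨_, qb * qc, mul_ne_zero hqb0 hqc0, mul_mem hqb hqc, ?_, ?_, rfl⟩
  · rw [hsum, show qb * qc * -(pb / qb) = -(pb * qc) by field_simp]
    exact neg_mem (mul_mem hpb hqc)
  · rw [hprod, show qb * qc * (pc / qc) = qb * pc by field_simp]
    exact mul_mem hqb hpc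

lemma IsGaussianQuadraticRoots.inv_sub {D x y a : ℂ} (h : IsGaussianQuadraticRoots D x y)
    (ha : a ∈ 𝒢) (hx : x ≠ a) (hy : y ≠ a) :
    IsGaussianQuadraticRoots D (x - a)⁻¹ (y - a)⁻¹ := by
  obtain ⟨L, hL0, hL, hS, hP, hD⟩ := h
  have hx' := sub_ne_zero.mpr hx
  have hy' := sub_ne_zero.mpr hy
  refine ⟨L * (x - a) * (y - a), by simp [hL0, hx', hy'], ?_, ?_, ?_, ?_⟩
  · rw [show L * (x - a) * (y - a) = L * (x * y) - L * (x + y) * a + L * a ^ 2 by ring]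
    exact add_mem (sub_mem hP (mul_mem hS ha)) (mul_mem hL (pow_mem ha 2))
  · rw [show L * (x - a) * (y - a) * ((x - a)⁻¹ + (y - a)⁻¹) = L * (x + y) - L * a - L * a by
      field_simp; ring]
    exact sub_mem (sub_mem hS (mul_mem hL ha)) (mul_mem hL ha)
  · rwa [show L * (x - a) * (y - a) * ((x - a)⁻¹ * (y - a)⁻¹) = L by field_simp]
  · rw [← hD, show L * (x - a) * (y - a) * ((x - a)⁻¹ - (y - a)⁻¹) = -(L * (x - y)) by
      field_simp; ring, neg_sq]

lemma eq_and_eq_of_add_eq_of_sq_sub_eq {x y x' y' : ℂ} (hs : x + y = x' + y')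
    (hd : (x - y) ^ 2 = (x' - y') ^ 2) (hne : x ≠ y') : x = x' ∧ y = y' := by
  rcases sq_eq_sq_iff_eq_or_eq_neg.mp hd with h | h
  · exact ⟨by linear_combination (hs + h) / 2, by linear_combination (hs - h) / 2⟩
  · exact absurd (by linear_combination (hs + h) / 2) hne

lemma exists_lt_eq_of_isGaussianQuadraticRoots {D : ℂ} {x y : ℕ → ℂ}
    (h : ∀ n, IsGaussianQuadraticRoots D (x n) (y n)) (hx : ∀ n, 2 ≤ ‖x n‖)
    (hy : ∀ n, ‖y n‖ ≤ 1) : ∃ m n, m < n ∧ x m = x n ∧ y m = y n := by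
  choose L hL0 hL hS _ hD using h
  have hdisc : ∀ n, ‖L n * (x n - y n)‖ = √‖D‖ := fun n => by
    rw [← hD n, norm_pow, Real.sqrt_sq (norm_nonneg _)]
  have hLle : ∀ n, ‖L n‖ ≤ √‖D‖ := fun n => by
    rw [← hdisc n, norm_mul]
    exact le_mul_of_one_le_right (norm_nonneg _)
      (by linarith [norm_sub_norm_le (x n) (y n), hx n, hy n])
  have hSle : ∀ n, ‖L n * (x n + y n)‖ ≤ 3 * √‖D‖ := fun n => by
    calc ‖L n * (x n + y n)‖ = ‖L n * (x n - y n) + 2 * (L n * y n)‖ := by ring_nf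
      _ ≤ √‖D‖ + 2 * (‖L n‖ * ‖y n‖) := by
        rw [← hdisc n, ← norm_mul, ← Complex.norm_two, ← norm_mul]
        exact norm_add_le _ _
      _ ≤ 3 * √‖D‖ := by nlinarith [hLle n, hy n, norm_nonneg (L n), norm_nonneg (y n)]
  let S := {z : ℂ | z ∈ 𝒢 ∧ ‖z‖ ≤ 3 * √‖D‖}
  have hmaps : Set.MapsTo (fun n => (L n, L n * (x n + y n))) Set.univ (S ×ˢ S) := fun n _ =>
    ⟨⟨hL n, (hLle n).trans (by linarith [Real.sqrt_nonneg ‖D‖])⟩, ⟨hS n, hSle n⟩⟩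
  obtain ⟨m, -, n, -, hmn, heq⟩ := Set.infinite_univ.exists_ne_map_eq_of_mapsTo hmaps
    ((finite_setOf_mem_range_norm_le _).prod (finite_setOf_mem_range_norm_le _))
  obtain ⟨hLmn, hSmn⟩ := Prod.mk.injEq _ _ _ _ ▸ heq
  have hsum : x m + y m = x n + y n := mul_left_cancel₀ (hL0 n) (hLmn ▸ hSmn)
  have hdiff : (x m - y m) ^ 2 = (x n - y n) ^ 2 := by
    have := (hD m).trans (hD n).symm
    rw [hLmn, mul_pow, mul_pow] at this
    exact mul_left_cancel₀ (pow_ne_zero 2 (hL0 n)) this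
  have hne : x m ≠ y n := fun h => by linarith [hx m, hy n, congrArg norm h]
  obtain ⟨hxmn, hymn⟩ := eq_and_eq_of_add_eq_of_sq_sub_eq hsum hdiff hne
  rcases hmn.lt_or_gt with hlt | hlt
  · exact ⟨m, n, hlt, hxmn, hymn⟩
  · exact ⟨n, m, hlt, hxmn.symm, hymn.symm⟩

lemma isGaussianQuadraticRoots_hcf {D ξ η : ℂ} (ha : ∀ n, 11 / 4 ≤ ‖hcfA ξ n‖) (hη : InFund η)
    (h : IsGaussianQuadraticRoots D ξ η) (n : ℕ) :
    IsGaussianQuadraticRoots D (hcfZ ξ n) (hcfConj ξ η n) := by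
  induction n with
  | zero => exact h
  | succ n ih =>
    have hconj_ne : hcfConj ξ η n ≠ hcfA ξ n := fun h' => by
      linarith [ha n, (inFund_hcfConj ha hη n).norm_lt, congrArg norm h']
    rw [hcfZ_succ, hcfConj]
    exact ih.inv_sub (nearGauss_mem_range _) (hcfZ_ne_hcfA ha n) hconj_ne

theorem purely_periodic_criterion_general (ξ η b c : ℂ)
    (hb : IsGaussianRational b) (hc : IsGaussianRational c)
    (hξ : ξ ^ 2 + b * ξ + c = 0) (hη : η ^ 2 + b * η + c = 0)
    (hηF : InFund η)
    (hbig : ∀ n : ℕ, Real.sqrt 8 ≤ ‖hcfA ξ n‖) :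
    ∃ m : ℕ, 1 ≤ m ∧ ∀ n : ℕ, hcfA ξ (n + m) = hcfA ξ n := by
  have ha : ∀ n, 11 / 4 ≤ ‖hcfA ξ n‖ := fun n =>
    ((Real.le_sqrt (by norm_num) (by norm_num)).mpr (by norm_num)).trans (hbig n)
  have hF := inFund_hcfConj ha hηF
  have hξη : ξ ≠ η := fun h => by
    have hξ2 : 2 < ‖ξ‖ := two_lt_norm_hcfZ ha 0
    linarith [hηF.norm_lt, h ▸ hξ2]
  obtain ⟨D, hD⟩ := isGaussianQuadraticRoots_of_isGaussianRational hb hc hξ hη hξη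
  obtain ⟨m, n, hmn, hZ, hC⟩ := exists_lt_eq_of_isGaussianQuadraticRoots
    (isGaussianQuadraticRoots_hcf ha hηF hD) (fun n => (two_lt_norm_hcfZ ha n).le)
    (fun n => by linarith [(hF n).norm_lt])
  have hperiod : hcfZ ξ (n - m) = ξ := by
    refine ((hcf_eq_of_add_eq hF m (r := 0) (s := n - m) ?_ ?_).1).symm <;>
      rwa [Nat.zero_add, Nat.sub_add_cancel hmn.le]
  exact ⟨n - m, by omega, hcfA_add_of_hcfZ_eq hperiod⟩

/-- a quadratic irrational `ξ` over `ℚ(i)` with `|ξ| > 1`, conjugate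
`η ∈ 𝔉`, and all partial quotients of absolute value at least `√8`, has purely
periodic HCF. -/
theorem purely_periodic_criterion (ξ η b c : ℂ)
    (hirr : ¬ IsGaussianRational ξ)
    (hb : IsGaussianRational b) (hc : IsGaussianRational c)
    (hξ : ξ ^ 2 + b * ξ + c = 0) (hη : η ^ 2 + b * η + c = 0) (hne : η ≠ ξ)
    (hξabs : 1 < ‖ξ‖) (hηF : InFund η)
    (hbig : ∀ n : ℕ, Real.sqrt 8 ≤ ‖hcfA ξ n‖) :
    ∃ m : ℕ, 1 ≤ m ∧ ∀ n : ℕ, hcfA ξ (n + m) = hcfA ξ n :=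
  purely_periodic_criterion_general ξ η b c hb hc hξ hη hηF hbig
end
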